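/- arXiv:1703.00471 — 2 statements merged into one kernel-verified Lean document; each statement's English description precedes it below -/
import Mathlib

section
/- Let Λ be a full-rank lattice in ℝ^d with Voronoi cell Ω, packing radius ρ, covering radius R, and let Δ be the closed ball of radius ω₀ > 0. Then vol(Δ \ Ω) = max{0, vol(Δ) − vol(Ω)} if and only if ω₀ ≤ ρ or ω₀ ≥ R. -/
/-!
Since `vol Δ < ∞`, the identity `vol (Δ \ Ω) = vol Δ - vol Ω` (truncated subtraction) holds exactly
when `Δ \ Ω` or `Ω \ Δ` is null. If `ρ < ω₀`, some lattice vector `l ≠ 0` has `‖l‖ < 2ω₀`, and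
the points `t • l` with `1/2 < t` and `t‖l‖ < ω₀` lie in the open set `ball 0 ω₀ \ Ω`. If `ω₀ < R`,
some `ω ∈ Ω` lies outside `Δ`; as `Ω` is convex with `0` in its interior (the lattice is
discrete), `ω` is a limit of interior points of `Ω`, so the open set `interior Ω \ Δ` is
nonempty. Conversely `ω₀ ≤ ρ` gives `Δ ⊆ Ω` and `R ≤ ω₀` gives `Ω ⊆ Δ`.
-/

open MeasureTheory Metric Set Submodule

section Metric

variable {E : Type*} [NormedAddCommGroup E]

def voronoiCell (Λ : Set E) : Set E := {ω | ∀ l ∈ Λ, ‖ω‖ ≤ ‖ω - l‖}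

/-- Half the minimal norm of a nonzero point of `Λ`; it is `sInf ∅ = 0` when `Λ ⊆ {0}`. -/
noncomputable def packingRadius (Λ : Set E) : ℝ := sInf {s : ℝ | ∃ l ∈ Λ, l ≠ 0 ∧ s = ‖l‖ / 2}

noncomputable def coveringRadius (Λ : Set E) : ℝ := sSup {s : ℝ | ∃ ω ∈ voronoiCell Λ, s = ‖ω‖}

variable {Λ : Set E}

theorem zero_mem_voronoiCell : (0 : E) ∈ voronoiCell Λ := fun l _ ↦ by simp

theorem isClosed_voronoiCell : IsClosed (voronoiCell Λ) := by
  rw [show voronoiCell Λ = ⋂ l ∈ Λ, {ω | ‖ω‖ ≤ ‖ω - l‖} by ext; simp [voronoiCell]]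
  exact isClosed_biInter fun l _ ↦ isClosed_le (by fun_prop) (by fun_prop)

theorem closedBall_subset_voronoiCell {r : ℝ} (h : ∀ l ∈ Λ, l ≠ 0 → 2 * r ≤ ‖l‖) :
    closedBall 0 r ⊆ voronoiCell Λ := by
  intro ω hω l hl
  rw [mem_closedBall_zero_iff] at hω
  obtain rfl | hl0 := eq_or_ne l 0
  · simp
  · linarith [h l hl hl0, norm_sub_norm_le l ω, norm_sub_rev l ω]

theorem packingRadius_le {l : E} (hl : l ∈ Λ) (hl0 : l ≠ 0) : packingRadius Λ ≤ ‖l‖ / 2 := by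
  refine csInf_le ⟨0, ?_⟩ ⟨l, hl, hl0, rfl⟩
  rintro _ ⟨l, -, -, rfl⟩
  positivity

theorem closedBall_subset_voronoiCell_of_le_packingRadius {r : ℝ} (h : r ≤ packingRadius Λ) :
    closedBall 0 r ⊆ voronoiCell Λ :=
  closedBall_subset_voronoiCell fun l hl hl0 ↦ by linarith [packingRadius_le hl hl0]

theorem exists_norm_lt_of_packingRadius_lt (hΛ : ∃ l ∈ Λ, l ≠ 0) {r : ℝ}
    (h : packingRadius Λ < r) : ∃ l ∈ Λ, l ≠ 0 ∧ ‖l‖ < 2 * r := by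
  obtain ⟨l, hl, hl0⟩ := hΛ
  obtain ⟨_, ⟨l, hl, hl0, rfl⟩, hlt⟩ := exists_lt_of_csInf_lt (by exact ⟨_, l, hl, hl0, rfl⟩) h
  exact ⟨l, hl, hl0, by linarith⟩

theorem norm_le_coveringRadius (hΩ : Bornology.IsBounded (voronoiCell Λ)) {ω : E}
    (hω : ω ∈ voronoiCell Λ) : ‖ω‖ ≤ coveringRadius Λ := by
  obtain ⟨C, hC⟩ := isBounded_iff_forall_norm_le.1 hΩ
  refine le_csSup ⟨C, ?_⟩ ⟨ω, hω, rfl⟩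
  rintro _ ⟨ω, hω, rfl⟩
  exact hC ω hω

theorem voronoiCell_subset_closedBall_of_coveringRadius_le
    (hΩ : Bornology.IsBounded (voronoiCell Λ)) {r : ℝ} (h : coveringRadius Λ ≤ r) :
    voronoiCell Λ ⊆ closedBall 0 r := fun _ hω ↦
  mem_closedBall_zero_iff.2 ((norm_le_coveringRadius hΩ hω).trans h)

theorem exists_mem_voronoiCell_lt_norm {r : ℝ} (h : r < coveringRadius Λ) :
    ∃ ω ∈ voronoiCell Λ, r < ‖ω‖ := by
  obtain ⟨_, ⟨ω, hω, rfl⟩, hlt⟩ :=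
    exists_lt_of_lt_csSup (by exact ⟨_, 0, zero_mem_voronoiCell, rfl⟩) h
  exact ⟨ω, hω, hlt⟩

end Metric

section NormedSpace

variable {E : Type*} [NormedAddCommGroup E] [NormedSpace ℝ E] {Λ : Set E}

theorem smul_notMem_voronoiCell {l : E} (hl : l ∈ Λ) (hl0 : l ≠ 0) {t : ℝ} (ht : 1 / 2 < t) :
    t • l ∉ voronoiCell Λ := by
  intro h
  have hlt : |t - 1| < |t| := by
    rw [abs_of_pos (by linarith : (0 : ℝ) < t), abs_sub_lt_iff]
    constructor <;> linarith
  have := h l hl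
  rw [show t • l - l = (t - 1) • l by rw [sub_smul, one_smul], norm_smul, norm_smul,
    Real.norm_eq_abs, Real.norm_eq_abs] at this
  exact absurd this (not_le.2 (mul_lt_mul_of_pos_right hlt (norm_pos_iff.2 hl0)))

theorem ball_diff_voronoiCell_nonempty {l : E} (hl : l ∈ Λ) (hl0 : l ≠ 0) {r : ℝ}
    (hr : ‖l‖ < 2 * r) : (ball 0 r \ voronoiCell Λ).Nonempty := by
  have hl_pos : 0 < ‖l‖ := norm_pos_iff.2 hl0
  have hhalf : 1 / 2 < r / ‖l‖ := by rw [lt_div_iff₀ hl_pos]; linarith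
  obtain ⟨t, ht, htr⟩ := exists_between hhalf
  refine ⟨t • l, ?_, smul_notMem_voronoiCell hl hl0 ht⟩
  rwa [mem_ball_zero_iff, norm_smul, Real.norm_eq_abs, abs_of_pos (by linarith),
    ← lt_div_iff₀ hl_pos]

theorem isBounded_voronoiCell_span {ι : Type*} [Fintype ι] (b : Module.Basis ι ℝ E) :
    Bornology.IsBounded (voronoiCell (span ℤ (range b) : Set E)) := by
  refine isBounded_iff_forall_norm_le.2 ⟨∑ i, ‖b i‖, fun ω hω ↦ ?_⟩
  calc ‖ω‖ ≤ ‖ω - ZSpan.floor b ω‖ := hω _ (ZSpan.floor b ω).2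
    _ = ‖ZSpan.fract b ω‖ := by rw [ZSpan.fract_apply]
    _ ≤ ∑ i, ‖b i‖ := ZSpan.norm_fract_le b ω

theorem zero_mem_interior_voronoiCell_span {ι : Type*} [Finite ι] (b : Module.Basis ι ℝ E) :
    (0 : E) ∈ interior (voronoiCell (span ℤ (range b) : Set E)) := by
  obtain ⟨ε, hε, hdisc⟩ := isOpen_singleton_iff.1 (isOpen_discrete {(0 : span ℤ (range b))})
  refine mem_interior_iff_mem_nhds.2 (Filter.mem_of_superset (closedBall_mem_nhds 0 (half_pos hε))
    (closedBall_subset_voronoiCell fun l hl hl0 ↦ ?_))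
  by_contra! hlt
  have : ‖l‖ < ε := by linarith
  exact hl0 (congrArg Subtype.val (hdisc ⟨l, hl⟩ (by simpa [dist_zero_right] using this)))

theorem measure_closedBall_diff_voronoiCell_ne_zero [MeasurableSpace E] (μ : Measure E)
    [μ.IsOpenPosMeasure] {l : E} (hl : l ∈ Λ) (hl0 : l ≠ 0) {r : ℝ} (hr : ‖l‖ < 2 * r) :
    μ (closedBall 0 r \ voronoiCell Λ) ≠ 0 := fun h ↦
  (isOpen_ball.sdiff isClosed_voronoiCell).measure_ne_zero μ
    (ball_diff_voronoiCell_nonempty hl hl0 hr)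
    (measure_mono_null (sdiff_subset_sdiff_left ball_subset_closedBall) h)

end NormedSpace

section InnerProductSpace

variable {E : Type*} [NormedAddCommGroup E] [InnerProductSpace ℝ E] {Λ : Set E}

theorem norm_le_norm_sub_iff_two_mul_inner_le (ω l : E) :
    ‖ω‖ ≤ ‖ω - l‖ ↔ 2 * inner ℝ ω l ≤ ‖l‖ ^ 2 := by
  rw [← sq_le_sq₀ (norm_nonneg _) (norm_nonneg _), norm_sub_sq_real]
  constructor <;> intro <;> linarith

theorem convex_voronoiCell : Convex ℝ (voronoiCell Λ) := by
  intro x hx y hy a c ha hc hac l hl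
  have hxl := (norm_le_norm_sub_iff_two_mul_inner_le x l).1 (hx l hl)
  have hyl := (norm_le_norm_sub_iff_two_mul_inner_le y l).1 (hy l hl)
  rw [norm_le_norm_sub_iff_two_mul_inner_le, inner_add_left, real_inner_smul_left,
    real_inner_smul_left]
  nlinarith

end InnerProductSpace

theorem measure_diff_eq_tsub_iff {α : Type*} [MeasurableSpace α] {μ : Measure α} {s t : Set α}
    (hs : NullMeasurableSet s μ) (ht : NullMeasurableSet t μ) (hfin : μ s ≠ ⊤) :
    μ (s \ t) = μ s - μ t ↔ μ (s \ t) = 0 ∨ μ (t \ s) = 0 := by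
  have hst : μ (s ∩ t) + μ (s \ t) = μ s := measure_inter_add_sdiff₀ s ht
  have hts : μ (s ∩ t) + μ (t \ s) = μ t := by
    rw [inter_comm]; exact measure_inter_add_sdiff₀ t hs
  rw [← hst, ← hts,
    ENNReal.add_sub_add_eq_sub_left (measure_ne_top_of_subset inter_subset_left hfin)]
  constructor
  · intro h
    by_contra! hne
    exact (ENNReal.sub_lt_self (measure_ne_top_of_subset sdiff_subset hfin) hne.1 hne.2).ne' h
  · rintro (h | h) <;> simp [h]

theorem Convex.measure_diff_ne_zero {E : Type*} [NormedAddCommGroup E] [NormedSpace ℝ E]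
    [MeasurableSpace E] (μ : Measure E) [μ.IsOpenPosMeasure] {s t : Set E} (hs : Convex ℝ s)
    (hs_int : (interior s).Nonempty) (ht : IsClosed t) {x : E} (hxs : x ∈ s) (hxt : x ∉ t) :
    μ (s \ t) ≠ 0 := by
  have hx : x ∈ closure (interior s) := by
    rw [hs.closure_interior_eq_closure_of_nonempty_interior hs_int]
    exact subset_closure hxs
  obtain ⟨y, hy⟩ := mem_closure_iff.1 hx tᶜ ht.isOpen_compl hxt
  exact fun h ↦ (isOpen_interior.sdiff ht).measure_ne_zero μ ⟨y, hy.2, hy.1⟩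
    (measure_mono_null (sdiff_subset_sdiff_left interior_subset) h)

theorem coe_span_int_range_eq_setOf_sum {E ι : Type*} [AddCommGroup E] [Module ℝ E] [Fintype ι]
    (b : Module.Basis ι ℝ E) :
    (span ℤ (range b) : Set E) = {x | ∃ c : ι → ℤ, x = ∑ i, (c i : ℝ) • b i} := by
  ext x
  simp only [SetLike.mem_coe, mem_span_range_iff_exists_fun, mem_ofPred_eq, Int.cast_smul_eq_zsmul]
  exact exists_congr fun c ↦ eq_comm

theorem stmt4 (d : ℕ) (b : Module.Basis (Fin d) ℝ (EuclideanSpace ℝ (Fin d)))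
    (Λ : Set (EuclideanSpace ℝ (Fin d)))
    (hΛ : Λ = {x | ∃ c : Fin d → ℤ, x = ∑ i, (c i : ℝ) • b i})
    (Ω : Set (EuclideanSpace ℝ (Fin d)))
    (hΩ : Ω = {ω | ∀ l ∈ Λ, ‖ω‖ ≤ ‖ω - l‖})
    (ρ : ℝ) (hρ : ρ = sInf {s : ℝ | ∃ l ∈ Λ, l ≠ 0 ∧ s = ‖l‖ / 2})
    (R : ℝ) (hR : R = sSup {s : ℝ | ∃ ω ∈ Ω, s = ‖ω‖})
    (ω₀ : ℝ) (hω₀ : 0 < ω₀)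
    (Δ : Set (EuclideanSpace ℝ (Fin d)))
    (hΔ : Δ = Metric.closedBall 0 ω₀) :
    volume (Δ \ Ω) = max 0 (volume Δ - volume Ω) ↔ (ω₀ ≤ ρ ∨ ω₀ ≥ R) := by
  obtain rfl : Ω = voronoiCell Λ := hΩ
  obtain rfl : ρ = packingRadius Λ := hρ
  obtain rfl : R = coveringRadius Λ := hR
  rw [← coe_span_int_range_eq_setOf_sum] at hΛ
  subst hΛ
  subst hΔ
  rw [max_eq_right zero_le, measure_diff_eq_tsub_iff measurableSet_closedBall.nullMeasurableSet
    isClosed_voronoiCell.measurableSet.nullMeasurableSet measure_closedBall_lt_top.ne]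
  constructor
  · contrapose!
    rintro ⟨hρω, hωR⟩
    obtain ⟨ω, hω, hωlt⟩ := exists_mem_voronoiCell_lt_norm hωR
    have : Nontrivial (EuclideanSpace ℝ (Fin d)) :=
      nontrivial_of_ne ω 0 (norm_pos_iff.1 (hω₀.trans hωlt))
    obtain ⟨i⟩ := b.index_nonempty
    obtain ⟨l, hl, hl0, hlω⟩ :=
      exists_norm_lt_of_packingRadius_lt ⟨b i, subset_span (mem_range_self i), b.ne_zero i⟩ hρω
    exact ⟨measure_closedBall_diff_voronoiCell_ne_zero volume hl hl0 hlω,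
      convex_voronoiCell.measure_diff_ne_zero volume ⟨0, zero_mem_interior_voronoiCell_span b⟩
        isClosed_closedBall hω (by simpa using hωlt)⟩
  · rintro (h | h)
    · left
      rw [sdiff_eq_empty.2 (closedBall_subset_voronoiCell_of_le_packingRadius h), measure_empty]
    · right
      rw [sdiff_eq_empty.2 (voronoiCell_subset_closedBall_of_coveringRadius_le
        (isBounded_voronoiCell_span b) h), measure_empty]
end

section
/- The covering radius of the E₈ lattice equals 1; i.e., every point of ℝ⁸ is within Euclidean distance 1 of some lattice point of E₈, and a deep hole such as (0,0,0,0,0,0,0,1) attains distance exactly 1. Formally: sup over x ∈ ℝ⁸ of dist(x, E₈) = 1. -/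
open Finset

lemma e8fix (x c : Fin 8 → ℝ) (g : Fin 8 → ℤ) (t : ℝ) (ht : t = 0 ∨ t = 1/2)
    (hc : ∀ i, c i = (g i : ℝ) + t) (hb : ∀ i, |x i - c i| ≤ 1/2) (m : Fin 8) :
    ∃ d : Fin 8 → ℝ, (∀ i, ∃ n : ℤ, d i = (n : ℝ) + t) ∧ (∃ k : ℤ, ∑ i, d i = 2 * (k : ℝ)) ∧
      ∑ i, (x i - d i)^2 ≤ ∑ i, (x i - c i)^2 + 1 - 2 * |x m - c m| := by
  have hgr : ∑ i, ((g i : ℤ) : ℝ) = ((∑ i, g i : ℤ) : ℝ) := by push_cast; rfl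
  have hsumc : ∑ i, c i = ((∑ i, g i : ℤ) : ℝ) + 8 * t := by
    rw [← hgr]; simp [hc, Finset.sum_add_distrib]
  rcases Int.even_or_odd (∑ i, g i) with ⟨k, hk⟩ | ⟨k, hk⟩
  · refine ⟨c, fun i => ⟨g i, hc i⟩, ?_, ?_⟩
    · rcases ht with h | h
      · exact ⟨k, by rw [hsumc, h, hk]; push_cast; ring⟩
      · exact ⟨k + 2, by rw [hsumc, h, hk]; push_cast; ring⟩
    · have := hb m
      have h0 : (0:ℝ) ≤ |x m - c m| := abs_nonneg _
      linarith
  · set s : ℝ := if 0 ≤ x m - c m then 1 else -1 with hs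
    set si : ℤ := if 0 ≤ x m - c m then 1 else -1 with hsi
    have hscast : (si : ℝ) = s := by by_cases h : 0 ≤ x m - c m <;> simp [hs, hsi, h]
    have hupd : ∀ i ∈ Finset.univ, Function.update c m (c m + s) i
        = c i + (if i = m then s else 0) := by
      intro i _
      by_cases hi : i = m
      · subst hi; rw [Function.update_self, if_pos rfl]
      · rw [Function.update_of_ne hi, if_neg hi, add_zero]
    have hsum : ∑ i, Function.update c m (c m + s) i = (∑ i, c i) + s := by
      rw [Finset.sum_congr rfl hupd, Finset.sum_add_distrib,
        Finset.sum_ite_eq' Finset.univ m (fun _ => s)]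
      simp
    have hupd2 : ∀ i ∈ Finset.univ, (x i - Function.update c m (c m + s) i)^2
        = (x i - c i)^2 + (if i = m then (x m - (c m + s))^2 - (x m - c m)^2 else 0) := by
      intro i _
      by_cases hi : i = m
      · subst hi; rw [Function.update_self, if_pos rfl]; ring
      · rw [Function.update_of_ne hi, if_neg hi, add_zero]
    refine ⟨Function.update c m (c m + s) , ?_, ?_, ?_⟩
    · intro i
      by_cases hi : i = m
      · subst hi
        refine ⟨g i + si, ?_⟩
        rw [Function.update_self, hc i, Int.cast_add, hscast]; ring
      · exact ⟨g i, by rw [Function.update_of_ne hi]; exact hc i⟩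
    · have hsival : (si : ℝ) = 1 ∨ (si : ℝ) = -1 := by
        by_cases h : 0 ≤ x m - c m
        · left; simp [hsi, h]
        · right; simp [hsi, h]
      rcases ht with h | h <;> rcases hsival with h2 | h2
      · exact ⟨k + 1, by rw [hsum, hsumc, h, hk, ← hscast, h2]; push_cast; ring⟩
      · exact ⟨k, by rw [hsum, hsumc, h, hk, ← hscast, h2]; push_cast; ring⟩
      · exact ⟨k + 3, by rw [hsum, hsumc, h, hk, ← hscast, h2]; push_cast; ring⟩
      · exact ⟨k + 2, by rw [hsum, hsumc, h, hk, ← hscast, h2]; push_cast; ring⟩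
    · have key : (x m - (c m + s))^2 = (x m - c m)^2 + 1 - 2 * |x m - c m| := by
        by_cases h : 0 ≤ x m - c m
        · rw [abs_of_nonneg h]; simp only [hs, if_pos h]; ring
        · rw [abs_of_neg (not_le.mp h)]; simp only [hs, if_neg h]; ring
      rw [Finset.sum_congr rfl hupd2, Finset.sum_add_distrib,
        Finset.sum_ite_eq' Finset.univ m (fun _ => (x m - (c m + s))^2 - (x m - c m)^2)]
      simp only [Finset.mem_univ, if_pos]
      rw [key]; ring_nf
      linarith [le_refl (0:ℝ)]

lemma e8key (a : Fin 8 → ℝ) (h0 : ∀ i, 0 ≤ a i) (h1 : ∀ i, a i ≤ 1/2)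
    (m m' : Fin 8) (hm : ∀ i, a i ≤ a m) (hm' : ∀ i, a m' ≤ a i) :
    (∑ i, (a i)^2 + 1 - 2 * a m ≤ 1) ∨
    (∑ i, (1/2 - a i)^2 + 1 - 2 * (1/2 - a m') ≤ 1) := by
  by_contra h
  push_neg at h
  obtain ⟨h₁, h₂⟩ := h
  have ha2 : 2 * a m < ∑ i, (a i)^2 := by linarith
  have hb2 : 2 * (1/2 - a m') < ∑ i, (1/2 - a i)^2 := by linarith
  have hA : ∑ i, (a i)^2 ≤ a m * ∑ i, a i := by
    rw [Finset.mul_sum]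
    exact Finset.sum_le_sum fun i _ => by nlinarith [h0 i, hm i]
  have hB : ∑ i, (1/2 - a i)^2 ≤ (1/2 - a m') * ∑ i, (1/2 - a i) := by
    rw [Finset.mul_sum]
    exact Finset.sum_le_sum fun i _ => by nlinarith [h1 i, hm' i]
  have hampos : 0 < a m := by
    rcases (h0 m).lt_or_eq with h | h
    · exact h
    · exfalso
      have hz : ∀ i, a i = 0 := fun i => le_antisymm (h.symm ▸ hm i) (h0 i)
      have hz2 : ∑ i, (a i)^2 = 0 := by simp [hz]
      rw [hz2] at ha2; rw [← h] at ha2; linarith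
  have hbmpos : 0 < 1/2 - a m' := by
    rcases lt_or_eq_of_le (h1 m') with h | h
    · linarith
    · exfalso
      have hz : ∀ i, a i = 1/2 := fun i => le_antisymm (h1 i) (h ▸ hm' i)
      have hz2 : ∑ i, (1/2 - a i)^2 = 0 := by simp [hz]
      rw [hz2] at hb2; rw [h] at hb2; linarith
  have hsa : 2 < ∑ i, a i := by nlinarith
  have hsb : 2 < ∑ i, (1/2 - a i) := by nlinarith
  have hse : ∑ i, (1/2 - a i) = 4 - ∑ i, a i := by
    rw [Finset.sum_sub_distrib]; simp; ring
  rw [hse] at hsb; linarith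

lemma e8cover (x : Fin 8 → ℝ) :
    ∃ d : Fin 8 → ℝ,
    ((∀ i, ∃ n : ℤ, d i = (n : ℝ)) ∨ (∀ i, ∃ n : ℤ, d i = (n : ℝ) + 1/2)) ∧
    (∃ k : ℤ, ∑ i, d i = 2 * (k : ℝ)) ∧ ∑ i, (x i - d i)^2 ≤ 1 := by
  set a : Fin 8 → ℝ := fun i => |x i - round (x i)| with ha
  have h0 : ∀ i, 0 ≤ a i := fun i => abs_nonneg _
  have h1 : ∀ i, a i ≤ 1/2 := fun i => abs_sub_round (x i)
  obtain ⟨m, -, hmax⟩ := Finset.exists_max_image Finset.univ a ⟨0, Finset.mem_univ 0⟩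
  obtain ⟨m', -, hmin⟩ := Finset.exists_min_image Finset.univ a ⟨0, Finset.mem_univ 0⟩
  have hm : ∀ i, a i ≤ a m := fun i => hmax i (Finset.mem_univ i)
  have hm' : ∀ i, a m' ≤ a i := fun i => hmin i (Finset.mem_univ i)
  set c' : Fin 8 → ℝ := fun i =>
    (round (x i) : ℝ) + (if 0 ≤ x i - round (x i) then 1/2 else -(1/2)) with hc'
  have hb' : ∀ i, |x i - c' i| = 1/2 - a i := by
    intro i
    by_cases h : 0 ≤ x i - round (x i)
    · simp only [hc', if_pos h, ha]
      rw [abs_of_nonneg h]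
      rw [abs_of_nonpos (by
        linarith [abs_sub_round (x i), abs_of_nonneg h] :
        x i - ((round (x i):ℝ) + 1/2) ≤ 0)]
      ring
    · push_neg at h
      simp only [hc', if_neg (not_le.mpr h), ha]
      rw [abs_of_neg h]
      rw [abs_of_nonneg (by
        have h2 := abs_sub_round (x i)
        rw [abs_of_neg h] at h2
        linarith : 0 ≤ x i - ((round (x i):ℝ) + -(1/2)))]
      ring
  rcases e8key a h0 h1 m m' hm hm' with hkey | hkey
  · obtain ⟨d, hd1, hd2, hd3⟩ := e8fix x (fun i => (round (x i) : ℝ)) (fun i => round (x i)) 0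
      (Or.inl rfl) (fun i => by simp) (fun i => h1 i) m
    refine ⟨d, Or.inl (fun i => by simpa using hd1 i), hd2, ?_⟩
    have hsq : ∑ i, (x i - (round (x i):ℝ))^2 = ∑ i, (a i)^2 :=
      Finset.sum_congr rfl fun i _ => (sq_abs _).symm
    have ham : |x m - (round (x m):ℝ)| = a m := rfl
    exact hd3.trans (by rw [hsq, ham]; exact hkey)
  · obtain ⟨d, hd1, hd2, hd3⟩ := e8fix x c'
      (fun i => if 0 ≤ x i - round (x i) then round (x i) else round (x i) - 1) (1/2)
      (Or.inr rfl)
      (fun i => by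
        by_cases h : 0 ≤ x i - round (x i)
        · simp only [hc', if_pos h]
        · simp only [hc', if_neg h]; push_cast; ring)
      (fun i => by rw [hb' i]; linarith [h0 i]) m'
    refine ⟨d, Or.inr hd1, hd2, ?_⟩
    have hsq : ∑ i, (x i - c' i)^2 = ∑ i, (1/2 - a i)^2 := by
      refine Finset.sum_congr rfl fun i _ => ?_
      rw [← sq_abs (x i - c' i), hb' i]
    exact hd3.trans (by rw [hsq, hb' m']; exact hkey)

lemma e8hole (l : Fin 8 → ℝ)
    (h : ((∀ i, ∃ n : ℤ, l i = (n : ℝ)) ∨ (∀ i, ∃ n : ℤ, l i = (n : ℝ) + 1/2)) ∧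
      ∃ k : ℤ, ∑ i, l i = 2 * (k : ℝ)) :
    1 ≤ ∑ i, ((if i = 0 then (1:ℝ) else 0) - l i)^2 := by
  obtain ⟨hcoset, k, hk⟩ := h
  rcases hcoset with hint | hhalf
  · choose n hn using hint
    by_contra hlt
    push_neg at hlt
    have hterm : ∀ i, ((if i = 0 then (1:ℝ) else 0) - l i)^2 < 1 := by
      intro i
      calc ((if i = 0 then (1:ℝ) else 0) - l i)^2
          ≤ ∑ j, ((if j = 0 then (1:ℝ) else 0) - l j)^2 :=
            Finset.single_le_sum (f := fun j => ((if j = 0 then (1:ℝ) else 0) - l j)^2)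
              (fun j _ => sq_nonneg _) (Finset.mem_univ i)
        _ < 1 := hlt
    have hval : ∀ i, l i = if i = 0 then (1:ℝ) else 0 := by
      intro i
      have h1 := hterm i
      rw [hn i] at h1 ⊢
      by_cases hi : i = 0
      · simp only [if_pos hi] at h1 ⊢
        have : n i = 1 := by
          by_contra hne
          have : ((1:ℝ) - (n i:ℝ))^2 ≥ 1 := by
            have : n i ≤ 0 ∨ 2 ≤ n i := by omega
            rcases this with h | h
            · have : (1:ℝ) ≤ 1 - (n i:ℝ) := by
                have : ((n i):ℝ) ≤ 0 := by exact_mod_cast h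
                linarith
              nlinarith
            · have : ((n i):ℝ) ≥ 2 := by exact_mod_cast h
              nlinarith
          linarith
        rw [this]; norm_num
      · simp only [if_neg hi] at h1 ⊢
        have : n i = 0 := by
          by_contra hne
          have h2 : n i ≤ -1 ∨ 1 ≤ n i := by omega
          rcases h2 with h2 | h2
          · have h3 : ((n i):ℝ) ≤ -1 := by exact_mod_cast h2
            nlinarith
          · have h3 : (1:ℝ) ≤ ((n i):ℝ) := by exact_mod_cast h2
            nlinarith
        rw [this]; norm_num
    have hsum : ∑ i, l i = 1 := by
      rw [Finset.sum_congr rfl (fun i _ => hval i)]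
      simp
    rw [hsum] at hk
    have : (1:ℤ) = 2 * k := by exact_mod_cast hk
    omega
  · choose n hn using hhalf
    have hterm : ∀ i, (1:ℝ)/4 ≤ ((if i = 0 then (1:ℝ) else 0) - l i)^2 := by
      intro i
      rw [hn i]
      set z : ℤ := (if i = 0 then 1 else 0) - n i with hz
      have hzr : (if i = 0 then (1:ℝ) else 0) - ((n i:ℝ) + 1/2) = (z:ℝ) - 1/2 := by
        by_cases hi : i = 0 <;> simp [hz, hi] <;> ring
      rw [hzr]
      have : z ≤ 0 ∨ 1 ≤ z := by omega
      rcases this with h | h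
      · have : (z:ℝ) ≤ 0 := by exact_mod_cast h
        nlinarith
      · have : (1:ℝ) ≤ (z:ℝ) := by exact_mod_cast h
        nlinarith
    calc (1:ℝ) ≤ ∑ _i : Fin 8, (1:ℝ)/4 := by simp; norm_num
      _ ≤ _ := Finset.sum_le_sum fun i _ => hterm i

lemma e8dist (x l : EuclideanSpace ℝ (Fin 8)) :
    dist x l = Real.sqrt (∑ i, (x i - l i)^2) := by
  rw [EuclideanSpace.dist_eq]
  congr 1
  exact Finset.sum_congr rfl fun i _ => by rw [Real.dist_eq, sq_abs]

theorem stmt16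
    (Λ : Set (EuclideanSpace ℝ (Fin 8)))
    (hΛ : Λ = {x | ((∀ i, ∃ n : ℤ, x i = (n : ℝ)) ∨ (∀ i, ∃ n : ℤ, x i = (n : ℝ) + 1 / 2)) ∧
      ∃ k : ℤ, ∑ i, x i = 2 * (k : ℝ)}) :
    (∀ x : EuclideanSpace ℝ (Fin 8), ∃ l ∈ Λ, dist x l ≤ 1) ∧
      (∃ x : EuclideanSpace ℝ (Fin 8), Metric.infDist x Λ = 1) ∧
      sSup (Set.range fun x : EuclideanSpace ℝ (Fin 8) => Metric.infDist x Λ) = 1 := by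
  subst hΛ
  set Λ : Set (EuclideanSpace ℝ (Fin 8)) :=
    {x | ((∀ i, ∃ n : ℤ, x i = (n : ℝ)) ∨ (∀ i, ∃ n : ℤ, x i = (n : ℝ) + 1 / 2)) ∧
      ∃ k : ℤ, ∑ i, x i = 2 * (k : ℝ)} with hΛ
  have part1 : ∀ x : EuclideanSpace ℝ (Fin 8), ∃ l ∈ Λ, dist x l ≤ 1 := by
    intro x
    obtain ⟨d, hd1, hd2, hd3⟩ := e8cover (fun i => x i)
    refine ⟨WithLp.toLp 2 d, ⟨?_, hd2⟩, ?_⟩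
    · rcases hd1 with h | h
      · exact Or.inl h
      · exact Or.inr h
    · rw [e8dist]
      exact Real.sqrt_le_one.mpr hd3
  have hne : Λ.Nonempty := by
    obtain ⟨l, hl, _⟩ := part1 0
    exact ⟨l, hl⟩
  set x₀ : EuclideanSpace ℝ (Fin 8) := WithLp.toLp 2 (fun i : Fin 8 => if i = 0 then (1:ℝ) else 0) with hx₀
  have hx0eq : Metric.infDist x₀ Λ = 1 := by
    apply le_antisymm
    · obtain ⟨l, hl, hd⟩ := part1 x₀
      exact (Metric.infDist_le_dist_of_mem hl).trans hd
    · by_contra hlt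
      push_neg at hlt
      obtain ⟨l, hl, hdl⟩ := (Metric.infDist_lt_iff hne).mp hlt
      have hge := e8hole (fun i => l i) hl
      have h1 : 1 ≤ dist x₀ l := by
        rw [e8dist]
        rw [show (1:ℝ) = Real.sqrt 1 from Real.sqrt_one.symm]
        exact Real.sqrt_le_sqrt hge
      linarith
  refine ⟨part1, ⟨x₀, hx0eq⟩, ?_⟩
  have hub : ∀ y ∈ Set.range (fun x : EuclideanSpace ℝ (Fin 8) => Metric.infDist x Λ),
      y ≤ 1 := by
    rintro y ⟨x, rfl⟩
    obtain ⟨l, hl, hd⟩ := part1 x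
    exact (Metric.infDist_le_dist_of_mem hl).trans hd
  apply le_antisymm
  · exact csSup_le (Set.range_nonempty _) hub
  · have : (1:ℝ) ∈ Set.range (fun x : EuclideanSpace ℝ (Fin 8) => Metric.infDist x Λ) :=
      ⟨x₀, hx0eq⟩
    exact le_csSup ⟨1, hub⟩ this
end
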